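/- Cluster property of the scaling Ising form factors: fix n >= 2 and real numbers theta_2, ..., theta_n. Then there exist constants Cc > 0 and Theta in R such that for all theta_1 >= Theta: | product over j = 2 to n of tanh((theta_1 - theta_j)/2) - 1 | <= Cc * exp(-theta_1). Consequently, the form factor O_n(theta_1, ..., theta_n) = (product over 1 <= i < j <= n of tanh((theta_i - theta_j)/2)) satisfies O_n(theta_1, theta_2, ..., theta_n) = O_1 * O_{n-1}(theta_2, ..., theta_n) + O(e^{-theta_1}) as theta_1 -> infinity, where O_1 = 1 and O_{n-1}(theta_2,...,theta_n) = product over 2 <= i < j <= n of tanh((theta_i - theta_j)/2). -/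

import Mathlib

/-- The (normalized) `n`-particle Ising form factor
`Oₙ(φ₁,…,φₙ) = ∏_{1 ≤ i < j ≤ n} tanh((φᵢ - φⱼ)/2)`, with rapidities indexed by
`0, 1, …, n-1`. -/
noncomputable def isingFormFactor (n : ℕ) (φ : ℕ → ℝ) : ℝ :=
  ∏ q ∈ (Finset.range n ×ˢ Finset.range n).filter (fun q => q.1 < q.2),
    Real.tanh ((φ q.1 - φ q.2) / 2)

/-!
Each factor `tanh((θ₁ - θⱼ)/2)` differs from `1` by at most `2 e^{θⱼ} e^{-θ₁}`, and a product
of factors of absolute value at most `1` differs from `1` by at most the sum of the individual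
deviations. The form factor `Oₙ` splits into the factors involving the first rapidity and
`O_{n-1}` of the others, and `|O_{n-1}| ≤ 1`, so the same bound controls `Oₙ - O_{n-1}`.
-/

open Finset

namespace Real

theorem abs_tanh_sub_one_le (x : ℝ) : |tanh x - 1| ≤ 2 * exp (-(2 * x)) := by
  calc |tanh x - 1| = 1 - tanh x := by
        rw [abs_sub_comm, abs_of_pos (sub_pos.mpr (tanh_lt_one x))]
    _ = 2 * exp (-x) / (exp x + exp (-x)) := by rw [tanh_eq]; field_simp; ring
    _ ≤ 2 * exp (-x) / exp x := by gcongr; linarith [exp_pos (-x)]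
    _ = 2 * exp (-(2 * x)) := by rw [mul_div_assoc, ← exp_sub]; ring_nf

theorem abs_tanh_half_sub_sub_one_le (t s : ℝ) :
    |tanh ((t - s) / 2) - 1| ≤ 2 * exp s * exp (-t) := by
  calc |tanh ((t - s) / 2) - 1| ≤ 2 * exp (-(2 * ((t - s) / 2))) := abs_tanh_sub_one_le _
    _ = 2 * exp s * exp (-t) := by rw [mul_assoc, ← exp_add]; ring_nf

end Real

theorem Finset.norm_prod_sub_one_le_sum {ι R : Type*} [SeminormedCommRing R] (s : Finset ι)
    (a : ι → R) (ha : ∀ i ∈ s, ‖a i‖ ≤ 1) : ‖∏ i ∈ s, a i - 1‖ ≤ ∑ i ∈ s, ‖a i - 1‖ := by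
  induction s using Finset.cons_induction with
  | empty => simp
  | cons i s _ ih =>
    rw [prod_cons, sum_cons]
    have hai : ‖a i‖ ≤ 1 := ha i (mem_cons_self i s)
    have hrest := ih fun j hj => ha j (mem_cons_of_mem hj)
    calc ‖a i * ∏ j ∈ s, a j - 1‖ = ‖a i * (∏ j ∈ s, a j - 1) + (a i - 1)‖ := by ring_nf
      _ ≤ ‖a i‖ * ‖∏ j ∈ s, a j - 1‖ + ‖a i - 1‖ := (norm_add_le _ _).trans (by
          gcongr; exact norm_mul_le _ _)
      _ ≤ 1 * ∑ j ∈ s, ‖a j - 1‖ + ‖a i - 1‖ := by gcongr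
      _ = ‖a i - 1‖ + ∑ j ∈ s, ‖a j - 1‖ := by ring

theorem abs_prod_tanh_half_sub_sub_one_le {ι : Type*} (s : Finset ι) (θ : ι → ℝ) (t : ℝ) :
    |∏ j ∈ s, Real.tanh ((t - θ j) / 2) - 1| ≤ (∑ j ∈ s, 2 * Real.exp (θ j)) * Real.exp (-t) := by
  have h := s.norm_prod_sub_one_le_sum (fun j => Real.tanh ((t - θ j) / 2))
    fun j _ => (Real.abs_tanh_lt_one _).le
  simp only [Real.norm_eq_abs] at h
  rw [sum_mul]
  exact h.trans (sum_le_sum fun j _ => Real.abs_tanh_half_sub_sub_one_le t (θ j))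

theorem prod_filter_lt_eq_prod_Ico_mul {M : Type*} [CommMonoid M] (n : ℕ) (g : ℕ × ℕ → M) :
    ∏ q ∈ (range n ×ˢ range n).filter (fun q => q.1 < q.2), g q =
      (∏ j ∈ Ico 1 n, g (0, j)) *
        ∏ q ∈ (range n ×ˢ range n).filter (fun q => 1 ≤ q.1 ∧ q.1 < q.2), g q := by
  rw [← prod_filter_mul_prod_filter_not _ (fun q => q.1 = 0), filter_filter, filter_filter]
  congr 1
  · refine prod_nbij' Prod.snd (fun j => (0, j)) ?_ ?_ ?_ (fun _ _ => rfl) ?_ <;>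
      intro q hq <;> simp only [mem_filter, mem_product, mem_range, mem_Ico] at hq
    · simp only [mem_Ico]; omega
    · simp only [mem_filter, mem_product, mem_range, and_true]; omega
    · exact Prod.ext hq.2.2.symm rfl
    · rw [← hq.2.2]
  · exact prod_congr (filter_congr fun q _ => by omega) fun _ _ => rfl

theorem isingFormFactor_update_zero (n : ℕ) (θ : ℕ → ℝ) (t : ℝ) :
    isingFormFactor n (Function.update θ 0 t) =
      (∏ j ∈ Ico 1 n, Real.tanh ((t - θ j) / 2)) *
        ∏ q ∈ (range n ×ˢ range n).filter (fun q => 1 ≤ q.1 ∧ q.1 < q.2),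
          Real.tanh ((θ q.1 - θ q.2) / 2) := by
  rw [isingFormFactor, prod_filter_lt_eq_prod_Ico_mul]
  congr 1
  · refine prod_congr rfl fun j hj => ?_
    rw [Function.update_self, Function.update_of_ne (by rw [mem_Ico] at hj; omega)]
  · refine prod_congr rfl fun q hq => ?_
    rw [mem_filter] at hq
    rw [Function.update_of_ne (by omega), Function.update_of_ne (by omega)]

theorem ising_form_factor_cluster_general (n : ℕ) (θ : ℕ → ℝ) :
    ∃ Cc > (0 : ℝ), ∃ Θ : ℝ, ∀ θ₁ ≥ Θ,
      |(∏ j ∈ Finset.Ico 1 n, Real.tanh ((θ₁ - θ j) / 2)) - 1| ≤ Cc * Real.exp (-θ₁) ∧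
      |isingFormFactor n (Function.update θ 0 θ₁) -
          1 * ∏ q ∈ (Finset.range n ×ˢ Finset.range n).filter
                (fun q => 1 ≤ q.1 ∧ q.1 < q.2),
              Real.tanh ((θ q.1 - θ q.2) / 2)|
        ≤ Cc * Real.exp (-θ₁) := by
  set C := ∑ j ∈ Ico 1 n, 2 * Real.exp (θ j)
  have hC : 0 ≤ C := by positivity
  refine ⟨C + 1, by positivity, 0, fun t _ => ?_⟩
  have hfirst : |∏ j ∈ Ico 1 n, Real.tanh ((t - θ j) / 2) - 1| ≤ (C + 1) * Real.exp (-t) :=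
    (abs_prod_tanh_half_sub_sub_one_le _ θ t).trans (by gcongr; linarith)
  refine ⟨hfirst, ?_⟩
  have hrest : |∏ q ∈ (range n ×ˢ range n).filter (fun q => 1 ≤ q.1 ∧ q.1 < q.2),
      Real.tanh ((θ q.1 - θ q.2) / 2)| ≤ 1 := by
    rw [abs_prod]
    exact prod_le_one (fun _ _ => abs_nonneg _) fun _ _ => (Real.abs_tanh_lt_one _).le
  rw [isingFormFactor_update_zero, one_mul, ← sub_one_mul, abs_mul]
  exact (mul_le_mul hfirst hrest (abs_nonneg _) (by positivity)).trans_eq (mul_one _)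

/-- Cluster property of the scaling Ising form factors: for fixed
`θ₂, …, θₙ` there are `Cc > 0` and `Θ` such that for all `θ₁ ≥ Θ`
`|∏_{j=2}^{n} tanh((θ₁ - θⱼ)/2) - 1| ≤ Cc e^{-θ₁}`, and consequently
`|Oₙ(θ₁,θ₂,…,θₙ) - O₁ · O_{n-1}(θ₂,…,θₙ)| ≤ Cc e^{-θ₁}` with `O₁ = 1`,
i.e. `Oₙ(θ₁,…) = O₁ O_{n-1}(…) + O(e^{-θ₁})` as `θ₁ → ∞`. -/
theorem ising_form_factor_cluster (n : ℕ) (hn : 2 ≤ n) (θ : ℕ → ℝ) :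
    ∃ Cc > (0 : ℝ), ∃ Θ : ℝ, ∀ θ₁ ≥ Θ,
      |(∏ j ∈ Finset.Ico 1 n, Real.tanh ((θ₁ - θ j) / 2)) - 1| ≤ Cc * Real.exp (-θ₁) ∧
      |isingFormFactor n (Function.update θ 0 θ₁) -
          1 * ∏ q ∈ (Finset.range n ×ˢ Finset.range n).filter
                (fun q => 1 ≤ q.1 ∧ q.1 < q.2),
              Real.tanh ((θ q.1 - θ q.2) / 2)|
        ≤ Cc * Real.exp (-θ₁) :=
  ising_form_factor_cluster_general n θ
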